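/- Assume ν̄ < ∞. In the branching Markov chain Z: (i) particles of type 0 never have any children; (ii) for any z ≥ 1 and any z₁,…,z_j ≥ 1, there exists n ≥ 0 (possibly depending on z, z₁,…,z_j) such that a particle of type z has strictly positive probability of having exactly j + n children whose types are z₁,…,z_j followed by n zeros; (iii) for every z ≥ 1, the probability that a particle of type z has at least one child of type 1 is at least (1 − ν(0))·ρ/(1+ρ)² > 0. -/

import Mathlib

/-!
Part (i) holds because `Θ₀ = 0`. For (ii), fix `m ≥ 1` with `ν m > 0` and force the urn to
receive `m` new balls at every step while color `1` is drawn `z₁` times, then color `2` is drawn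
`z₂` times, …, color `j` is drawn `z_j` times, and finally color `0` is drawn `z` times: this
finite cylinder has positive probability, and on it `N_z = Θ_z · m`.

Part (iii) rests on the recurrence of color `0`. Started with `c` colors, a block of
`c + ⌈ρ⌉` steps avoids color `0` with probability at most `1 - β`, with `β > 0` independent of
`c`: either few balls are added and `0` is likely to be drawn, or the excess
`∑ (ζ t - M)⁺` is large, which Markov's inequality makes unlikely once `M` is chosen with
`E (ζ - M)⁺` small, as `ν̄ < ∞` allows. Since color `0` is always `ρ` times as likely to be drawn
as a present color `c`, and the race between them ends almost surely, `c` wins it with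
probability `1 / (1 + ρ)`. With probability `1 - ν 0` a new color `c` arrives right after
`Θ_{z-1}`; it then wins a race against `0` and loses the next one with probability
`ρ / (1 + ρ)²`, and in that event `Y_z^c = 1`.
-/

open MeasureTheory ProbabilityTheory Filter
open scoped ENNReal NNReal Topology

namespace TBRWPaper

/-- The mean `ν̄ = Σ_k k ν(k)` of the offspring distribution `ν`, in `ℝ≥0∞`. -/
noncomputable def nubar (ν : PMF ℕ) : ℝ≥0∞ := ∑' k : ℕ, (k : ℝ≥0∞) * ν k

variable {Ω : Type*} [MeasurableSpace Ω]

/-- Number of non-zero colors present in the urn after the addition phase of step `n`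
(`ζ i` being the number of balls added at step `i`; colors are numbered consecutively,
so the colors present at that moment are exactly `0, 1, …, urnColors ζ n ω`). -/
def urnColors (ζ : ℕ → Ω → ℕ) (n : ℕ) (ω : Ω) : ℕ := ∑ i ∈ Finset.Icc 1 n, ζ i ω

/-- σ-algebra of the urn history up to (and including) step `n`. -/
def urnPast (ζ B : ℕ → Ω → ℕ) (n : ℕ) : MeasurableSpace Ω :=
  (⨆ i ∈ Finset.Icc 1 n, MeasurableSpace.comap (ζ i) ⊤) ⊔
  ⨆ i ∈ Finset.Icc 1 n, MeasurableSpace.comap (B i) ⊤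

/-- σ-algebra of the urn history just before the draw of step `n` (it includes the
addition phase of step `n`). -/
def urnHist (ζ B : ℕ → Ω → ℕ) (n : ℕ) : MeasurableSpace Ω :=
  urnPast ζ B (n - 1) ⊔ MeasurableSpace.comap (ζ n) ⊤

/-- `IsUrn ρ ν P ζ B` asserts that, under the probability measure `P`, the pair of
processes `(ζ n, B n)_{n ≥ 1}` performs the `(ρ,ν)`-TBRW urn process: at each step
`n ≥ 1`, first `ζ n ∼ ν` new balls (with brand new colors, numbered consecutively) are
added to the urn independently of the past, then a ball is drawn from the urn with
probability proportional to its weight (color `0` having weight `ρ`, every other ball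
weight `1`), its color `B n` is recorded, and it is returned to the urn. -/
structure IsUrn (ρ : ℝ) (ν : PMF ℕ) (P : Measure Ω) (ζ B : ℕ → Ω → ℕ) : Prop where
  prob : IsProbabilityMeasure P
  measζ : ∀ n, Measurable (ζ n)
  measB : ∀ n, Measurable (B n)
  ζ_law : ∀ n, 1 ≤ n → P.map (ζ n) = ν.toMeasure
  ζ_indep : ∀ n, 1 ≤ n → Indep (MeasurableSpace.comap (ζ n) ⊤) (urnPast ζ B (n - 1)) P
  B_le : ∀ n ω, 1 ≤ n → B n ω ≤ urnColors ζ n ω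
  draw_zero : ∀ n, 1 ≤ n → ∀ c : ℕ, ∀ H : Set Ω, MeasurableSet[urnHist ζ B n] H →
      P (H ∩ {ω | urnColors ζ n ω = c} ∩ {ω | B n ω = 0}) =
        ENNReal.ofReal (ρ / (ρ + c)) * P (H ∩ {ω | urnColors ζ n ω = c})
  draw_pos : ∀ n, 1 ≤ n → ∀ c j : ℕ, 1 ≤ j → j ≤ c → ∀ H : Set Ω,
      MeasurableSet[urnHist ζ B n] H →
      P (H ∩ {ω | urnColors ζ n ω = c} ∩ {ω | B n ω = j}) =
        ENNReal.ofReal (1 / (ρ + c)) * P (H ∩ {ω | urnColors ζ n ω = c})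

/-- Number of draws of color `0` up to step `n`. -/
def zeroCount (B : ℕ → Ω → ℕ) (n : ℕ) (ω : Ω) : ℕ :=
  ((Finset.Icc 1 n).filter (fun i => B i ω = 0)).card

/-- `Θ_k`: the step at which color `0` is drawn from the urn for the `k`-th time
(`Θ_0 = 0`; junk value `0` if color `0` is drawn fewer than `k` times). -/
noncomputable def Theta (B : ℕ → Ω → ℕ) (k : ℕ) (ω : Ω) : ℕ :=
  if k = 0 then 0 else sInf {n : ℕ | 1 ≤ n ∧ zeroCount B n ω = k}

/-- `N_k`: number of non-zero colors present in the urn at step `Θ_k`. -/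
noncomputable def Ncol (ζ B : ℕ → Ω → ℕ) (k : ℕ) (ω : Ω) : ℕ :=
  urnColors ζ (Theta B k ω) ω

/-- `Y_k^j`: number of times color `j` has been drawn from the urn up to step `Θ_k`. -/
noncomputable def Ydraw (ζ B : ℕ → Ω → ℕ) (k j : ℕ) (ω : Ω) : ℕ :=
  ((Finset.Icc 1 (Theta B k ω)).filter (fun i => B i ω = j)).card

set_option linter.unusedSectionVars false

section

variable {ρ : ℝ} {ν : PMF ℕ} {P : Measure Ω} {ζ B : ℕ → Ω → ℕ} {ω : Ω}

lemma urnPast_mono {m n : ℕ} (hmn : m ≤ n) : urnPast ζ B m ≤ urnPast ζ B n := by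
  have hsub : ∀ i ∈ Finset.Icc 1 m, i ∈ Finset.Icc 1 n := fun i hi => by
    simp only [Finset.mem_Icc] at hi ⊢; omega
  exact sup_le_sup (biSup_mono hsub) (biSup_mono hsub)

lemma measurable_zeta_urnPast {i n : ℕ} (h1 : 1 ≤ i) (h2 : i ≤ n) :
    Measurable[urnPast ζ B n] (ζ i) :=
  Measurable.of_comap_le <| le_sup_of_le_left <|
    le_biSup (fun i => MeasurableSpace.comap (ζ i) ⊤) (Finset.mem_Icc.2 ⟨h1, h2⟩)

lemma measurable_B_urnPast {i n : ℕ} (h1 : 1 ≤ i) (h2 : i ≤ n) :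
    Measurable[urnPast ζ B n] (B i) :=
  Measurable.of_comap_le <| le_sup_of_le_right <|
    le_biSup (fun i => MeasurableSpace.comap (B i) ⊤) (Finset.mem_Icc.2 ⟨h1, h2⟩)

lemma urnPast_le_urnHist {m n : ℕ} (hmn : m < n) : urnPast ζ B m ≤ urnHist ζ B n :=
  le_sup_of_le_left (urnPast_mono (by omega))

lemma urnHist_le_urnPast {n m : ℕ} (hn : 1 ≤ n) (hnm : n ≤ m) :
    urnHist ζ B n ≤ urnPast ζ B m :=
  sup_le (urnPast_mono (by omega)) (measurable_zeta_urnPast hn hnm).comap_le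

lemma measurable_zeta_urnHist (n : ℕ) : Measurable[urnHist ζ B n] (ζ n) :=
  Measurable.of_comap_le le_sup_right

lemma measurableSet_urnPast_forall {n : ℕ} {I : Finset ℕ} (hI : ∀ t ∈ I, 1 ≤ t ∧ t ≤ n)
    (p : ℕ → ℕ → ℕ → Prop) :
    MeasurableSet[urnPast ζ B n] {ω | ∀ t ∈ I, p t (ζ t ω) (B t ω)} := by
  simp only [Set.ofPred_forall]
  refine Finset.measurableSet_biInter I fun t ht => ?_
  exact ((measurable_zeta_urnPast (hI t ht).1 (hI t ht).2).prodMk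
    (measurable_B_urnPast (hI t ht).1 (hI t ht).2)) (MeasurableSet.of_discrete
      (s := {x : ℕ × ℕ | p t x.1 x.2}))

lemma urnColors_add (s n : ℕ) (ω : Ω) :
    urnColors ζ (s + n) ω = urnColors ζ s ω + ∑ i ∈ Finset.Ioc s (s + n), ζ i ω :=
  (Finset.sum_Ioc_consecutive _ (Nat.zero_le s) (Nat.le_add_right s n)).symm

lemma urnColors_succ (n : ℕ) (ω : Ω) : urnColors ζ (n + 1) ω = urnColors ζ n ω + ζ (n + 1) ω :=
  Finset.sum_Ioc_succ_top (Nat.zero_le n) _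

lemma urnColors_mono {m n : ℕ} (hmn : m ≤ n) (ω : Ω) : urnColors ζ m ω ≤ urnColors ζ n ω :=
  Finset.sum_le_sum_of_subset (Finset.Icc_subset_Icc_right hmn)

lemma measurable_urnColors_urnPast (n : ℕ) : Measurable[urnPast ζ B n] (urnColors ζ n) :=
  Finset.measurable_sum _ fun _ hi =>
    measurable_zeta_urnPast (Finset.mem_Icc.1 hi).1 (Finset.mem_Icc.1 hi).2

lemma measurable_urnColors_urnHist {n : ℕ} (hn : 1 ≤ n) :
    Measurable[urnHist ζ B n] (urnColors ζ n) := by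
  obtain ⟨n, rfl⟩ := Nat.exists_eq_add_of_le' hn
  rw [show urnColors ζ (n + 1) = fun ω => urnColors ζ n ω + ζ (n + 1) ω from
    funext (urnColors_succ n)]
  exact ((measurable_urnColors_urnPast n).mono (urnPast_le_urnHist n.lt_succ_self) le_rfl).add
    (measurable_zeta_urnHist _)

lemma measurable_zeroCount_urnPast {i n : ℕ} (hin : i ≤ n) :
    Measurable[urnPast ζ B n] (zeroCount B i) := by
  have hsum : zeroCount B i = fun ω => ∑ t ∈ Finset.Icc 1 i, if B t ω = 0 then 1 else 0 := by
    funext ω; rw [zeroCount, Finset.card_filter]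
  rw [hsum]
  exact Finset.measurable_sum _ fun t ht =>
    (Measurable.of_discrete (f := fun x : ℕ => if x = 0 then 1 else 0)).comp
    (measurable_B_urnPast (Finset.mem_Icc.1 ht).1 ((Finset.mem_Icc.1 ht).2.trans hin))

lemma measurableSet_inter_urnColors_eq {n : ℕ} (hn : 1 ≤ n) {H : Set Ω}
    (hH : MeasurableSet[urnHist ζ B n] H) (C : ℕ) :
    MeasurableSet[urnHist ζ B n] (H ∩ urnColors ζ n ⁻¹' {C}) :=
  hH.inter (measurable_urnColors_urnHist hn (measurableSet_singleton C))

lemma measure_eq_tsum_inter_fiber {α : Type*} [MeasurableSpace α] (μ : Measure α) {f : α → ℕ}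
    (hf : Measurable f) (H : Set α) : μ H = ∑' n, μ (H ∩ f ⁻¹' {n}) := by
  have := tsum_measure_preimage_singleton (μ := μ.restrict H) Set.countable_univ
    (fun n _ => hf (measurableSet_singleton n))
  rw [tsum_univ (fun n => μ.restrict H (f ⁻¹' {n})), Set.preimage_univ,
    Measure.restrict_apply_univ] at this
  simp_rw [← this, Measure.restrict_apply (hf (measurableSet_singleton _)), Set.inter_comm]

lemma measure_iUnion_of_subset_fiber {α β : Type*} [MeasurableSpace α] (μ : Measure α)
    (f : α → β) {F : β → Set α} (hF : ∀ b, F b ⊆ f ⁻¹' {b}) (hm : ∀ b, MeasurableSet (F b))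
    [Countable β] : μ (⋃ b, F b) = ∑' b, μ (F b) :=
  measure_iUnion (fun a b hab => Set.disjoint_left.2 fun _ ha hb =>
    hab ((hF a ha).symm.trans (hF b hb))) hm

namespace IsUrn

lemma urnPast_le (h : IsUrn ρ ν P ζ B) (n : ℕ) : urnPast ζ B n ≤ ‹MeasurableSpace Ω› :=
  sup_le (iSup₂_le fun i _ => (h.measζ i).comap_le) (iSup₂_le fun i _ => (h.measB i).comap_le)

lemma urnHist_le (h : IsUrn ρ ν P ζ B) (n : ℕ) : urnHist ζ B n ≤ ‹MeasurableSpace Ω› :=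
  sup_le (h.urnPast_le _) (h.measζ n).comap_le

lemma measurable_urnColors (h : IsUrn ρ ν P ζ B) (n : ℕ) : Measurable (urnColors ζ n) :=
  Finset.measurable_sum _ fun i _ => h.measζ i

lemma measure_draw_zero_of_subset (h : IsUrn ρ ν P ζ B) {n c : ℕ} (hn : 1 ≤ n) {H : Set Ω}
    (hH : MeasurableSet[urnHist ζ B n] H) (hHc : H ⊆ {ω | urnColors ζ n ω = c}) :
    P (H ∩ {ω | B n ω = 0}) = ENNReal.ofReal (ρ / (ρ + c)) * P H := by
  have := h.draw_zero n hn c H hH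
  rwa [Set.inter_eq_left.2 hHc] at this

lemma measure_draw_pos_of_subset (h : IsUrn ρ ν P ζ B) {n c j : ℕ} (hn : 1 ≤ n) (hj : 1 ≤ j)
    (hjc : j ≤ c) {H : Set Ω} (hH : MeasurableSet[urnHist ζ B n] H)
    (hHc : H ⊆ {ω | urnColors ζ n ω = c}) :
    P (H ∩ {ω | B n ω = j}) = ENNReal.ofReal (1 / (ρ + c)) * P H := by
  have := h.draw_pos n hn c j hj hjc H hH
  rwa [Set.inter_eq_left.2 hHc] at this

lemma measure_draw_zero_eq_mul (h : IsUrn ρ ν P ζ B) (hρ : 0 ≤ ρ) {n c : ℕ} (hn : 1 ≤ n)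
    (hc : 1 ≤ c) {H : Set Ω} (hH : MeasurableSet[urnHist ζ B n] H)
    (hcH : ∀ ω ∈ H, c ≤ urnColors ζ n ω) :
    P (H ∩ {ω | B n ω = 0}) = ENNReal.ofReal ρ * P (H ∩ {ω | B n ω = c}) := by
  rw [measure_eq_tsum_inter_fiber P (h.measurable_urnColors n),
    measure_eq_tsum_inter_fiber P (h.measurable_urnColors n) (H ∩ _), ← ENNReal.tsum_mul_left]
  refine tsum_congr fun C => ?_
  rw [Set.inter_right_comm, Set.inter_right_comm H {ω | B n ω = c}]
  rcases le_or_gt c C with hcC | hCc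
  · rw [h.measure_draw_zero_of_subset hn (measurableSet_inter_urnColors_eq hn hH C)
      Set.inter_subset_right, h.measure_draw_pos_of_subset hn hc hcC
      (measurableSet_inter_urnColors_eq hn hH C) Set.inter_subset_right, ← mul_assoc,
      ← ENNReal.ofReal_mul hρ, mul_one_div]
  · have hempty : H ∩ urnColors ζ n ⁻¹' {C} = ∅ :=
      Set.eq_empty_iff_forall_notMem.2 fun ω hω => (hcH ω hω.1).not_gt (hω.2 ▸ hCc)
    simp [hempty]

lemma measure_draw_nonzero_le (h : IsUrn ρ ν P ζ B) (hρ : 0 < ρ) {n L : ℕ} (hn : 1 ≤ n)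
    {H : Set Ω} (hH : MeasurableSet[urnHist ζ B n] H) (hHL : ∀ ω ∈ H, urnColors ζ n ω ≤ L) :
    P (H ∩ {ω | B n ω ≠ 0}) ≤ ENNReal.ofReal (1 - ρ / (ρ + L)) * P H := by
  have := h.prob
  rw [measure_eq_tsum_inter_fiber P (h.measurable_urnColors n),
    measure_eq_tsum_inter_fiber P (h.measurable_urnColors n) H, ← ENNReal.tsum_mul_left]
  refine ENNReal.tsum_le_tsum fun C => ?_
  rw [Set.inter_right_comm]
  rcases le_or_gt C L with hCL | hLC
  · set HC := H ∩ urnColors ζ n ⁻¹' {C}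
    have hHC := measurableSet_inter_urnColors_eq hn hH C
    have hadd : P (HC ∩ {ω | B n ω ≠ 0}) + P (HC ∩ {ω | B n ω = 0}) = P HC := by
      rw [add_comm, ← measure_inter_add_sdiff HC (h.measB n (measurableSet_singleton 0))]
      rfl
    have hx : ρ / (ρ + L) ≤ ρ / (ρ + C) :=
      div_le_div_of_nonneg_left hρ.le (by positivity) (by
        have : (C : ℝ) ≤ L := by exact_mod_cast hCL
        linarith)
    calc P (HC ∩ {ω | B n ω ≠ 0}) = P HC - P (HC ∩ {ω | B n ω = 0}) :=
          ENNReal.eq_sub_of_add_eq (measure_ne_top _ _) hadd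
      _ ≤ P HC - ENNReal.ofReal (ρ / (ρ + L)) * P HC := by
          rw [h.measure_draw_zero_of_subset hn hHC Set.inter_subset_right]
          gcongr
      _ = ENNReal.ofReal (1 - ρ / (ρ + L)) * P HC := by
          rw [ENNReal.ofReal_sub 1 (by positivity), ENNReal.ofReal_one,
            ENNReal.sub_mul fun _ _ => measure_ne_top _ _, one_mul]
  · have hempty : H ∩ urnColors ζ n ⁻¹' {C} = ∅ :=
      Set.eq_empty_iff_forall_notMem.2 fun ω hω => (hHL ω hω.1).not_gt (hω.2 ▸ hLC)
    simp [hempty]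

lemma measure_inter_zeta_preimage (h : IsUrn ρ ν P ζ B) {n : ℕ} (hn : 1 ≤ n) {G : Set Ω}
    (hG : MeasurableSet[urnPast ζ B (n - 1)] G) (S : Set ℕ) :
    P (G ∩ ζ n ⁻¹' S) = ν.toMeasure S * P G := by
  have := h.prob
  rw [Set.inter_comm, (indepSet_iff_measure_inter_eq_mul (h.measζ n .of_discrete)
      (h.urnPast_le _ _ hG) P).1 ((h.ζ_indep n hn).indepSet_of_measurableSet ⟨S, trivial, rfl⟩ hG),
    ← Measure.map_apply (h.measζ n) .of_discrete, h.ζ_law n hn]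

lemma map_zeta_restrict (h : IsUrn ρ ν P ζ B) {n : ℕ} (hn : 1 ≤ n) {G : Set Ω}
    (hG : MeasurableSet[urnPast ζ B (n - 1)] G) :
    (P.restrict G).map (ζ n) = P G • ν.toMeasure := by
  ext S hS
  rw [Measure.map_apply (h.measζ n) hS, Measure.restrict_apply (h.measζ n hS), Set.inter_comm,
    h.measure_inter_zeta_preimage hn hG, Measure.smul_apply, smul_eq_mul, mul_comm]

lemma setLIntegral_comp_zeta (h : IsUrn ρ ν P ζ B) {n : ℕ} (hn : 1 ≤ n) {G : Set Ω}
    (hG : MeasurableSet[urnPast ζ B (n - 1)] G) (f : ℕ → ℝ≥0∞) :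
    ∫⁻ ω in G, f (ζ n ω) ∂P = (∑' k, f k * ν k) * P G := by
  rw [← lintegral_map Measurable.of_discrete (h.measζ n), h.map_zeta_restrict hn hG,
    lintegral_smul_measure, lintegral_countable', smul_eq_mul, mul_comm]
  simp_rw [PMF.toMeasure_apply_singleton _ _ (measurableSet_singleton _)]

end IsUrn

lemma one_sub_pow_mul_le {x : ℝ} (h0 : 0 ≤ x) (h1 : x ≤ 1) (n : ℕ) :
    (1 - x) ^ n * (1 + n * x) ≤ 1 := by
  calc (1 - x) ^ n * (1 + n * x) ≤ (1 - x) ^ n * (1 + x) ^ n := by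
        gcongr
        exact one_add_mul_le_pow (by linarith) n
    _ = (1 - x ^ 2) ^ n := by rw [← mul_pow]; ring
    _ ≤ 1 := pow_le_one₀ (by nlinarith) (by nlinarith)

/-- The left side bounds the probability of avoiding color `0` during a block of `T = c + ⌈ρ⌉`
steps in which at most `c + 2MT` colors are present; the bound does not depend on `c`. -/
lemma one_sub_div_pow_le {ρ : ℝ} (hρ : 0 < ρ) (c M : ℕ) :
    (1 - ρ / (ρ + (c + 2 * M * (c + ⌈ρ⌉₊) : ℕ))) ^ (c + ⌈ρ⌉₊) ≤ 1 - ρ / (1 + 2 * M + ρ) := by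
  set T := c + ⌈ρ⌉₊
  set L : ℕ := c + 2 * M * T
  have hT : (c : ℝ) + ρ ≤ T := by
    simp only [T, Nat.cast_add]; linarith [Nat.le_ceil ρ]
  have hL : (L : ℝ) = c + 2 * M * T := by simp [L]
  set x := ρ / (ρ + L)
  have hx0 : 0 ≤ x := by positivity
  have hx1 : x ≤ 1 :=
    div_le_one_of_le₀ (by linarith [(L.cast_nonneg : (0 : ℝ) ≤ L)]) (by positivity)
  have hTx : ρ / (1 + 2 * M) ≤ T * x := by
    rw [mul_div_assoc', div_le_div_iff₀ (by positivity) (by positivity)]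
    nlinarith [(M.cast_nonneg : (0 : ℝ) ≤ M)]
  have hkey : 1 ≤ (1 - ρ / (1 + 2 * M + ρ)) * (1 + T * x) := by
    have h1 : 1 - ρ / (1 + 2 * M + ρ) = (1 + 2 * M) / (1 + 2 * M + ρ) := by
      field_simp; ring
    rw [h1, div_mul_eq_mul_div, one_le_div (by positivity)]
    rw [div_le_iff₀ (by positivity)] at hTx
    nlinarith
  have hpow := one_sub_pow_mul_le hx0 hx1 T
  have hr : 0 ≤ 1 - ρ / (1 + 2 * M + ρ) :=
    sub_nonneg.2 (div_le_one_of_le₀ (by linarith [(M.cast_nonneg : (0 : ℝ) ≤ M)]) (by positivity))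
  nlinarith [pow_nonneg (sub_nonneg.2 hx1) T]

noncomputable def excessMoment (ν : PMF ℕ) (M : ℕ) : ℝ≥0∞ :=
  ∑' k : ℕ, ((k - M : ℕ) : ℝ≥0∞) * ν k

lemma tendsto_excessMoment {ν : PMF ℕ} (hν : nubar ν < ⊤) :
    Tendsto (excessMoment ν) atTop (𝓝 0) := by
  refine tendsto_of_tendsto_of_tendsto_of_le_of_le tendsto_const_nhds
    (ENNReal.tendsto_sum_nat_add (fun k => (k : ℝ≥0∞) * ν k) hν.ne) (fun _ => bot_le)
    fun M => ?_
  have hsplit : excessMoment ν M = ∑ k ∈ Finset.range M, ((k - M : ℕ) : ℝ≥0∞) * ν k +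
      ∑' k, ((k + M - M : ℕ) : ℝ≥0∞) * ν (k + M) :=
    (ENNReal.summable.hasSum.sum_range_add).tsum_eq
  rw [hsplit, Finset.sum_eq_zero fun k hk => by
      rw [Finset.mem_range] at hk
      simp [Nat.sub_eq_zero_of_le hk.le],
    zero_add]
  exact ENNReal.tsum_le_tsum fun k => by gcongr; omega

def noZeroBetween (B : ℕ → Ω → ℕ) (s n : ℕ) : Set Ω := {ω | ∀ t ∈ Finset.Ioc s n, B t ω ≠ 0}

def noZeroAfter (B : ℕ → Ω → ℕ) (s : ℕ) : Set Ω := {ω | ∀ t, s < t → B t ω ≠ 0}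

lemma measurableSet_noZeroBetween (s n : ℕ) :
    MeasurableSet[urnPast ζ B n] (noZeroBetween B s n) :=
  measurableSet_urnPast_forall (fun t ht => by simp only [Finset.mem_Ioc] at ht; omega)
    fun _ _ b => b ≠ 0

lemma excess_gt_of_urnColors_gt {s c M T : ℕ} (hc : urnColors ζ s ω = c)
    (hL : c + 2 * M * T < urnColors ζ (s + T) ω) :
    M * T < ∑ t ∈ Finset.Ioc s (s + T), (ζ t ω - M) := by
  have hsum : ∑ t ∈ Finset.Ioc s (s + T), ζ t ω ≤
      M * T + ∑ t ∈ Finset.Ioc s (s + T), (ζ t ω - M) := by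
    calc _ ≤ ∑ t ∈ Finset.Ioc s (s + T), (M + (ζ t ω - M)) :=
          Finset.sum_le_sum fun t _ => by omega
      _ = _ := by
          rw [Finset.sum_add_distrib, Finset.sum_const, Nat.card_Ioc, smul_eq_mul,
            Nat.add_sub_cancel_left, mul_comm]
  rw [urnColors_add, hc] at hL
  nlinarith

namespace IsUrn

lemma measure_noZeroBetween_of_urnColors_le (h : IsUrn ρ ν P ζ B) (hρ : 0 < ρ) {s : ℕ} {G : Set Ω}
    (hG : MeasurableSet[urnPast ζ B s] G) (L n : ℕ) :
    P (G ∩ {ω | urnColors ζ (s + n) ω ≤ L} ∩ noZeroBetween B s (s + n)) ≤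
      ENNReal.ofReal (1 - ρ / (ρ + L)) ^ n * P G := by
  induction n with
  | zero =>
    rw [pow_zero, one_mul]
    exact measure_mono (Set.inter_subset_left.trans Set.inter_subset_left)
  | succ n ih =>
    set H := G ∩ {ω | urnColors ζ (s + n + 1) ω ≤ L} ∩ noZeroBetween B s (s + n)
    have hH : MeasurableSet[urnHist ζ B (s + n + 1)] H :=
      ((urnPast_le_urnHist (by omega) _ hG).inter
        (measurable_urnColors_urnHist (by omega) measurableSet_Iic)).inter
        (urnPast_le_urnHist (by omega) _ (measurableSet_noZeroBetween s (s + n)))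
    have hsub : G ∩ {ω | urnColors ζ (s + (n + 1)) ω ≤ L} ∩ noZeroBetween B s (s + (n + 1)) ⊆
        H ∩ {ω | B (s + n + 1) ω ≠ 0} := by
      rintro ω ⟨⟨hωG, hωL⟩, hno⟩
      refine ⟨⟨⟨hωG, hωL⟩, fun t ht => hno t ?_⟩, hno _ ?_⟩ <;>
        simp only [Finset.mem_Ioc] at * <;> omega
    have hHD : H ⊆ G ∩ {ω | urnColors ζ (s + n) ω ≤ L} ∩ noZeroBetween B s (s + n) :=
      fun ω ⟨⟨hωG, hωL⟩, hno⟩ => ⟨⟨hωG, (urnColors_mono (by omega) ω).trans hωL⟩, hno⟩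
    calc _ ≤ P (H ∩ {ω | B (s + n + 1) ω ≠ 0}) := measure_mono hsub
      _ ≤ ENNReal.ofReal (1 - ρ / (ρ + L)) * P H :=
          h.measure_draw_nonzero_le hρ (by omega) hH fun ω hω => hω.1.2
      _ ≤ ENNReal.ofReal (1 - ρ / (ρ + L)) * (ENNReal.ofReal (1 - ρ / (ρ + L)) ^ n * P G) := by
          gcongr
          exact (measure_mono hHD).trans ih
      _ = _ := by rw [pow_succ]; ring

lemma measure_excess_ge_le (h : IsUrn ρ ν P ζ B) {s : ℕ} {G : Set Ω}
    (hG : MeasurableSet[urnPast ζ B s] G) (M T a : ℕ) :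
    (a : ℝ≥0∞) * P (G ∩ {ω | a ≤ ∑ t ∈ Finset.Ioc s (s + T), (ζ t ω - M)}) ≤
      T * excessMoment ν M * P G := by
  set X : Ω → ℕ := fun ω => ∑ t ∈ Finset.Ioc s (s + T), (ζ t ω - M)
  have hX : Measurable fun ω => (X ω : ℝ≥0∞) :=
    Measurable.of_discrete.comp (Finset.measurable_sum _ fun t _ =>
      (Measurable.of_discrete (f := fun k : ℕ => k - M)).comp (h.measζ t))
  have hmeas : MeasurableSet {ω | (a : ℝ≥0∞) ≤ X ω} := hX measurableSet_Ici
  calc (a : ℝ≥0∞) * P (G ∩ {ω | a ≤ X ω}) = a * P.restrict G {ω | (a : ℝ≥0∞) ≤ X ω} := by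
        rw [Measure.restrict_apply hmeas, Set.inter_comm]
        simp only [Nat.cast_le]
    _ ≤ ∫⁻ ω in G, (X ω : ℝ≥0∞) ∂P := mul_meas_ge_le_lintegral₀ hX.aemeasurable _
    _ = ∑ t ∈ Finset.Ioc s (s + T), ∫⁻ ω in G, ((ζ t ω - M : ℕ) : ℝ≥0∞) ∂P := by
        simp only [X, Nat.cast_sum]
        exact lintegral_finsetSum _ fun t _ =>
          Measurable.of_discrete.comp ((Measurable.of_discrete (f := fun k : ℕ => k - M)).comp
            (h.measζ t))
    _ = ∑ t ∈ Finset.Ioc s (s + T), excessMoment ν M * P G :=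
        Finset.sum_congr rfl fun t ht => by
          simp only [Finset.mem_Ioc] at ht
          exact h.setLIntegral_comp_zeta (by omega) (urnPast_mono (by omega) _ hG)
            fun k => ((k - M : ℕ) : ℝ≥0∞)
    _ = T * excessMoment ν M * P G := by
        rw [Finset.sum_const, Nat.card_Ioc, nsmul_eq_mul, Nat.add_sub_cancel_left, mul_assoc]

lemma measure_excess_gt_le (h : IsUrn ρ ν P ζ B) {s : ℕ} {G : Set Ω}
    (hG : MeasurableSet[urnPast ζ B s] G) {M : ℕ} {ε : ℝ≥0∞} (hM : excessMoment ν M ≤ ε * M)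
    (T : ℕ) : P (G ∩ {ω | M * T < ∑ t ∈ Finset.Ioc s (s + T), (ζ t ω - M)}) ≤ ε * P G := by
  have hne : ((M * T + 1 : ℕ) : ℝ≥0∞) ≠ 0 := by simp
  refine (ENNReal.mul_le_mul_iff_right hne (ENNReal.natCast_ne_top _)).1 ?_
  calc ((M * T + 1 : ℕ) : ℝ≥0∞) * P (G ∩ {ω | M * T < ∑ t ∈ Finset.Ioc s (s + T), (ζ t ω - M)})
      ≤ T * excessMoment ν M * P G := h.measure_excess_ge_le hG M T _
    _ ≤ T * (ε * M) * P G := by gcongr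
    _ = (T * M) * (ε * P G) := by ring
    _ ≤ ((M * T + 1 : ℕ) : ℝ≥0∞) * (ε * P G) := by
        gcongr
        push_cast
        rw [mul_comm]
        exact le_self_add

lemma measure_inter_noZeroBetween_block_le (h : IsUrn ρ ν P ζ B) (hρ : 0 < ρ) {M : ℕ}
    (hM : excessMoment ν M ≤ ENNReal.ofReal (ρ / (1 + 2 * M + ρ) / 2) * M) {s c : ℕ}
    {G : Set Ω} (hG : MeasurableSet[urnPast ζ B s] G) (hGc : G ⊆ {ω | urnColors ζ s ω = c}) :
    P (G ∩ noZeroBetween B s (s + (c + ⌈ρ⌉₊))) ≤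
      ENNReal.ofReal (1 - ρ / (1 + 2 * M + ρ) / 2) * P G := by
  set r := ρ / (1 + 2 * M + ρ)
  set T := c + ⌈ρ⌉₊
  set L := c + 2 * M * T
  set E := G ∩ {ω | M * T < ∑ t ∈ Finset.Ioc s (s + T), (ζ t ω - M)}
  have hr0 : 0 ≤ r := by positivity
  have hr1 : r ≤ 1 :=
    div_le_one_of_le₀ (by linarith [(M.cast_nonneg : (0 : ℝ) ≤ M)]) (by positivity)
  have hcover : G ∩ noZeroBetween B s (s + T) ⊆
      (G ∩ {ω | urnColors ζ (s + T) ω ≤ L} ∩ noZeroBetween B s (s + T)) ∪ E := by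
    rintro ω ⟨hωG, hno⟩
    by_cases hL : urnColors ζ (s + T) ω ≤ L
    · exact Or.inl ⟨⟨hωG, hL⟩, hno⟩
    · exact Or.inr ⟨hωG, excess_gt_of_urnColors_gt (hGc hωG) (not_le.1 hL)⟩
  have hrun : P (G ∩ {ω | urnColors ζ (s + T) ω ≤ L} ∩ noZeroBetween B s (s + T)) ≤
      ENNReal.ofReal (1 - r) * P G := by
    refine (h.measure_noZeroBetween_of_urnColors_le hρ hG L T).trans ?_
    gcongr
    rw [← ENNReal.ofReal_pow (sub_nonneg.2 (div_le_one_of_le₀ (by simp) (by positivity)))]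
    exact ENNReal.ofReal_le_ofReal (one_sub_div_pow_le hρ c M)
  calc P (G ∩ noZeroBetween B s (s + T)) ≤
        P (G ∩ {ω | urnColors ζ (s + T) ω ≤ L} ∩ noZeroBetween B s (s + T)) + P E :=
        (measure_mono hcover).trans (measure_union_le _ _)
    _ ≤ ENNReal.ofReal (1 - r) * P G + ENNReal.ofReal (r / 2) * P G :=
        add_le_add hrun (h.measure_excess_gt_le hG hM T)
    _ = ENNReal.ofReal (1 - r / 2) * P G := by
        rw [← add_mul, ← ENNReal.ofReal_add (by linarith) (by positivity)]
        ring_nf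

lemma measure_inter_noZeroAfter_le_pow (h : IsUrn ρ ν P ζ B) (hρ : 0 < ρ) {M : ℕ}
    (hM : excessMoment ν M ≤ ENNReal.ofReal (ρ / (1 + 2 * M + ρ) / 2) * M) (K : ℕ) :
    ∀ (s : ℕ) (G : Set Ω), MeasurableSet[urnPast ζ B s] G →
      P (G ∩ noZeroAfter B s) ≤ ENNReal.ofReal (1 - ρ / (1 + 2 * M + ρ) / 2) ^ K * P G := by
  induction K with
  | zero => exact fun s G _ => by simpa using measure_mono Set.inter_subset_left
  | succ K ih =>
    intro s G hG
    rw [measure_eq_tsum_inter_fiber P (h.measurable_urnColors s),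
      measure_eq_tsum_inter_fiber P (h.measurable_urnColors s) G, ← ENNReal.tsum_mul_left]
    refine ENNReal.tsum_le_tsum fun c => ?_
    set Gc := G ∩ urnColors ζ s ⁻¹' {c}
    have hGc : MeasurableSet[urnPast ζ B s] Gc :=
      hG.inter (measurable_urnColors_urnPast s (measurableSet_singleton c))
    set T := c + ⌈ρ⌉₊
    have hsub : G ∩ noZeroAfter B s ∩ urnColors ζ s ⁻¹' {c} ⊆
        Gc ∩ noZeroBetween B s (s + T) ∩ noZeroAfter B (s + T) := by
      rintro ω ⟨⟨hωG, hno⟩, hωc⟩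
      refine ⟨⟨⟨hωG, hωc⟩, fun t ht => hno t (Finset.mem_Ioc.1 ht).1⟩, fun t ht => hno t ?_⟩
      omega
    calc _ ≤ P (Gc ∩ noZeroBetween B s (s + T) ∩ noZeroAfter B (s + T)) := measure_mono hsub
      _ ≤ ENNReal.ofReal (1 - ρ / (1 + 2 * M + ρ) / 2) ^ K * P (Gc ∩ noZeroBetween B s (s + T)) :=
          ih _ _ ((urnPast_mono (by omega) _ hGc).inter (measurableSet_noZeroBetween _ _))
      _ ≤ ENNReal.ofReal (1 - ρ / (1 + 2 * M + ρ) / 2) ^ K *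
            (ENNReal.ofReal (1 - ρ / (1 + 2 * M + ρ) / 2) * P Gc) := by
          gcongr
          exact h.measure_inter_noZeroBetween_block_le hρ hM hGc Set.inter_subset_right
      _ = _ := by ring

lemma measure_noZeroAfter (h : IsUrn ρ ν P ζ B) (hρ : 0 < ρ) (hν : nubar ν < ⊤) (s : ℕ) :
    P (noZeroAfter B s) = 0 := by
  obtain ⟨M, hM, hM1⟩ := (((tendsto_excessMoment hν).eventually
    (ge_mem_nhds (ENNReal.ofReal_pos.2 (by positivity : 0 < ρ / (2 * (3 + ρ)))))).and
    (eventually_ge_atTop 1)).exists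
  set r := ρ / (1 + 2 * M + ρ)
  have hM1' : (1 : ℝ) ≤ M := by exact_mod_cast hM1
  have hM' : excessMoment ν M ≤ ENNReal.ofReal (r / 2) * M := by
    refine hM.trans ?_
    rw [← ENNReal.ofReal_natCast, ← ENNReal.ofReal_mul (by positivity)]
    refine ENNReal.ofReal_le_ofReal ?_
    rw [div_div, div_mul_eq_mul_div, div_le_div_iff₀ (by positivity) (by positivity)]
    nlinarith [mul_nonneg hρ.le (sub_nonneg.2 hM1')]
  have hlt : ENNReal.ofReal (1 - r / 2) < 1 := by
    rw [← ENNReal.ofReal_one, ENNReal.ofReal_lt_ofReal_iff one_pos]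
    linarith [(by positivity : 0 < r)]
  refine le_antisymm (ge_of_tendsto (ENNReal.tendsto_pow_atTop_nhds_zero_of_lt_one hlt)
    (Eventually.of_forall fun K => ?_)) bot_le
  have := h.prob
  have key := h.measure_inter_noZeroAfter_le_pow hρ hM' K s Set.univ MeasurableSet.univ
  rwa [Set.univ_inter, measure_univ, mul_one] at key

end IsUrn

lemma zeroCount_zero : zeroCount B 0 ω = 0 := rfl

lemma zeroCount_succ (n : ℕ) :
    zeroCount B (n + 1) ω = zeroCount B n ω + if B (n + 1) ω = 0 then 1 else 0 := by
  simp only [zeroCount, Finset.card_filter]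
  exact Finset.sum_Ioc_succ_top (Nat.zero_le n) _

lemma zeroCount_mono {m n : ℕ} (hmn : m ≤ n) : zeroCount B m ω ≤ zeroCount B n ω :=
  Finset.card_le_card (Finset.filter_subset_filter _ (Finset.Icc_subset_Icc_right hmn))

lemma zeroCount_eq_of_forall_ne_zero {s n : ℕ} (hsn : s ≤ n)
    (hno : ∀ t ∈ Finset.Ioc s n, B t ω ≠ 0) : zeroCount B n ω = zeroCount B s ω := by
  induction n, hsn using Nat.le_induction with
  | base => rfl
  | succ n hsn ih =>
    rw [zeroCount_succ, if_neg (hno _ (Finset.mem_Ioc.2 ⟨by omega, le_rfl⟩)), add_zero,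
      ih fun t ht => hno t (Finset.mem_Ioc.2 ⟨(Finset.mem_Ioc.1 ht).1, by
        have := (Finset.mem_Ioc.1 ht).2; omega⟩)]

lemma zeroCount_eq_succ_of_next_zero {k s v : ℕ} (hzc : zeroCount B s ω = k) (hsv : s < v)
    (hno : ∀ i ∈ Finset.Ioo s v, B i ω ≠ 0) (hv : B v ω = 0) :
    zeroCount B v ω = k + 1 := by
  obtain ⟨v, rfl⟩ := Nat.exists_eq_add_of_le' (Nat.one_le_of_lt hsv)
  rw [zeroCount_succ, if_pos hv, zeroCount_eq_of_forall_ne_zero (by omega) fun t ht =>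
    hno t (Finset.mem_Ioo.2 ⟨(Finset.mem_Ioc.1 ht).1, by have := (Finset.mem_Ioc.1 ht).2; omega⟩),
    hzc]

lemma Theta_zero : Theta B 0 ω = 0 := rfl

lemma Theta_eq {k s : ℕ} (hk : k ≠ 0) (hs : 1 ≤ s) (hzc : zeroCount B s ω = k)
    (hlt : ∀ i < s, zeroCount B i ω < k) : Theta B k ω = s := by
  rw [Theta, if_neg hk]
  refine le_antisymm (Nat.sInf_le ⟨hs, hzc⟩) (le_csInf ⟨s, hs, hzc⟩ fun i ⟨_, hi⟩ => ?_)
  by_contra hlt'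
  exact (hlt i (not_le.1 hlt')).ne hi

lemma Theta_succ_eq {k s v : ℕ} (hzc : zeroCount B s ω = k) (hsv : s < v)
    (hno : ∀ i ∈ Finset.Ioo s v, B i ω ≠ 0) (hv : B v ω = 0) : Theta B (k + 1) ω = v := by
  have hv' := zeroCount_eq_succ_of_next_zero hzc hsv hno hv
  refine Theta_eq k.succ_ne_zero (by omega) hv' fun i hi => ?_
  have hprev : zeroCount B (v - 1) ω = k := by
    rw [← hzc]
    exact zeroCount_eq_of_forall_ne_zero (by omega) fun t ht =>
      hno t (Finset.mem_Ioo.2 ⟨(Finset.mem_Ioc.1 ht).1, by have := (Finset.mem_Ioc.1 ht).2; omega⟩)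
  have := zeroCount_mono (B := B) (ω := ω) (show i ≤ v - 1 by omega)
  omega

lemma Theta_eq_and_zeroCount_iff {k s : ℕ} (hk : k ≠ 0) :
    Theta B k ω = s ∧ zeroCount B s ω = k ↔
      1 ≤ s ∧ zeroCount B s ω = k ∧ zeroCount B (s - 1) ω < k := by
  constructor
  · rintro ⟨hθ, hzc⟩
    have hs : 1 ≤ s := Nat.one_le_iff_ne_zero.2 fun h0 => hk (by rw [← hzc, h0, zeroCount_zero])
    refine ⟨hs, hzc, lt_of_le_of_ne (hzc ▸ zeroCount_mono (by omega)) fun heq => ?_⟩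
    rcases Nat.lt_or_ge (s - 1) 1 with h1 | h1
    · rw [show s - 1 = 0 by omega, zeroCount_zero] at heq
      exact hk heq.symm
    · have := Nat.notMem_of_lt_sInf (s := {n | 1 ≤ n ∧ zeroCount B n ω = k})
        (show s - 1 < sInf _ by rw [Theta, if_neg hk] at hθ; omega)
      exact this ⟨h1, heq⟩
  · rintro ⟨hs, hzc, hprev⟩
    exact ⟨Theta_eq hk hs hzc fun i hi =>
      (zeroCount_mono (show i ≤ s - 1 by omega)).trans_lt hprev, hzc⟩

lemma measurableSet_Theta_eq (k s : ℕ) :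
    MeasurableSet[urnPast ζ B s] {ω | Theta B k ω = s ∧ zeroCount B s ω = k} := by
  rcases Nat.eq_zero_or_pos k with rfl | hk
  · simp only [Theta_zero]
    exact (MeasurableSet.const _).inter
      (measurable_zeroCount_urnPast le_rfl (measurableSet_singleton 0))
  · simp only [Theta_eq_and_zeroCount_iff hk.ne']
    exact (MeasurableSet.const _).inter
      ((measurable_zeroCount_urnPast le_rfl (measurableSet_singleton k)).inter
        (measurable_zeroCount_urnPast (by omega) measurableSet_Iio))

lemma exists_zeroCount_eq (hω : ∀ s, ω ∉ noZeroAfter B s) (k : ℕ) :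
    ∃ n, zeroCount B n ω = k := by
  induction k with
  | zero => exact ⟨0, rfl⟩
  | succ k ih =>
    obtain ⟨n, hn⟩ := ih
    have hex : ∃ t, n < t ∧ B t ω = 0 := by
      simpa [noZeroAfter] using hω n
    classical
    refine ⟨Nat.find hex, zeroCount_eq_succ_of_next_zero hn (Nat.find_spec hex).1
      (fun i hi hi0 => Nat.find_min hex (Finset.mem_Ioo.1 hi).2 ⟨(Finset.mem_Ioo.1 hi).1, hi0⟩)
      (Nat.find_spec hex).2⟩

lemma zeroCount_Theta (hω : ∀ s, ω ∉ noZeroAfter B s) (k : ℕ) :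
    zeroCount B (Theta B k ω) ω = k := by
  rcases Nat.eq_zero_or_pos k with rfl | hk
  · rfl
  obtain ⟨n, hn⟩ := exists_zeroCount_eq hω k
  have hn1 : 1 ≤ n := Nat.one_le_iff_ne_zero.2 fun h0 => by
    rw [h0, zeroCount_zero] at hn; omega
  rw [Theta, if_neg hk.ne']
  exact (Nat.sInf_mem (⟨n, hn1, hn⟩ : {n | 1 ≤ n ∧ zeroCount B n ω = k}.Nonempty)).2

def stackWord (g : ℕ → ℕ) : ℕ → List ℕ
  | 0 => []
  | k + 1 => stackWord g k ++ List.replicate (g k) (k + 1)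

section StackWord

variable {g : ℕ → ℕ}

lemma count_stackWord (ℓ k : ℕ) :
    (stackWord g k).count ℓ = if 1 ≤ ℓ ∧ ℓ ≤ k then g (ℓ - 1) else 0 := by
  induction k with
  | zero => exact (if_neg (by omega)).symm
  | succ k ih =>
    rw [stackWord, List.count_append, ih, List.count_replicate]
    by_cases hℓ : ℓ = k + 1
    · subst hℓ; simp
    · have : ¬((k + 1 == ℓ) = true) := by rw [beq_iff_eq]; omega
      rw [if_neg this]
      split_ifs <;> omega

lemma le_length_stackWord (hg : ∀ i, 1 ≤ g i) (k : ℕ) : k ≤ (stackWord g k).length := by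
  induction k with
  | zero => exact le_rfl
  | succ k ih =>
    rw [stackWord, List.length_append, List.length_replicate]
    exact Nat.add_le_add ih (hg k)

lemma getD_replicate_le (n a q : ℕ) : (List.replicate n a).getD q 0 ≤ a := by
  rcases Nat.lt_or_ge q n with hq | hq
  · exact (List.getD_replicate a hq).le
  · rw [List.getD_eq_default _ _ (by simpa using hq)]
    exact Nat.zero_le a

/-- Color `k + 1` first appears in `stackWord g` after at least `k` entries, so a schedule
following the word only draws colors that are already present. -/
lemma getD_stackWord_le (hg : ∀ i, 1 ≤ g i) (k p : ℕ) : (stackWord g k).getD p 0 ≤ p + 1 := by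
  induction k with
  | zero => simp [stackWord]
  | succ k ih =>
    rw [stackWord]
    rcases Nat.lt_or_ge p (stackWord g k).length with hp | hp
    · rw [List.getD_append _ _ _ _ hp]
      exact ih
    · rw [List.getD_append_right _ _ _ _ hp]
      have := le_length_stackWord hg k
      exact (getD_replicate_le _ _ _).trans (by omega)

lemma getD_stackWord_append_le (hg : ∀ i, 1 ≤ g i) (k z : ℕ) {t : ℕ} (ht : 1 ≤ t) :
    (stackWord g k ++ List.replicate z 0).getD (t - 1) 0 ≤ t := by
  rcases lt_or_ge (t - 1) (stackWord g k).length with hlt | hge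
  · rw [List.getD_append _ _ _ _ hlt]
    have := getD_stackWord_le hg k (t - 1)
    omega
  · rw [List.getD_append_right _ _ _ _ hge]
    exact (getD_replicate_le _ _ _).trans (Nat.zero_le t)

end StackWord

lemma exists_ne_zero_apply_ne_zero (hν0 : ν 0 < 1) : ∃ m, m ≠ 0 ∧ ν m ≠ 0 := by
  by_contra! hν
  have htot := ν.tsum_coe
  rw [tsum_eq_single 0 hν] at htot
  exact hν0.ne htot

lemma card_filter_eq_count_take {w : List ℕ} {n : ℕ}
    (hn : n ≤ w.length) (hB : ∀ t ∈ Finset.Icc 1 n, B t ω = w.getD (t - 1) 0) (a : ℕ) :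
    ((Finset.Icc 1 n).filter (fun t => B t ω = a)).card = (w.take n).count a := by
  induction n with
  | zero => simp
  | succ n ih =>
    rw [← Finset.insert_Icc_right_eq_Icc_add_one (by omega), Finset.filter_insert,
      List.take_add_one, List.count_append, List.getElem?_eq_getElem (by omega),
      Option.toList_some, List.count_singleton,
      ← ih (by omega) fun t ht => hB t (Finset.Icc_subset_Icc_right (by omega) ht),
      hB _ (Finset.mem_Icc.2 ⟨by omega, le_rfl⟩), Nat.add_sub_cancel,
      List.getD_eq_getElem _ _ (by omega)]
    by_cases hwa : w[n] = a
    · rw [if_pos hwa, Finset.card_insert_of_notMem (by simp), if_pos (by simpa using hwa)]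
    · rw [if_neg hwa, if_neg (by simpa using hwa), add_zero]

lemma Theta_eq_length {u : List ℕ} {z : ℕ} (hz : 1 ≤ z)
    (hu : u.count 0 = 0)
    (hB : ∀ t ∈ Finset.Icc 1 (u ++ List.replicate z 0).length,
      B t ω = (u ++ List.replicate z 0).getD (t - 1) 0) :
    Theta B z ω = (u ++ List.replicate z 0).length := by
  have hzc : ∀ i ≤ (u ++ List.replicate z 0).length,
      zeroCount B i ω = min (i - u.length) z := by
    intro i hi
    have hcount : (u.take i).count 0 = 0 :=
      Nat.eq_zero_of_le_zero (((List.take_sublist i u).count_le 0).trans hu.le)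
    rw [zeroCount, card_filter_eq_count_take hi
      (fun t ht => hB t (Finset.Icc_subset_Icc_right hi ht)), List.take_append,
      List.count_append, hcount, List.take_replicate, List.count_replicate_self, zero_add]
  have hlen : (u ++ List.replicate z 0).length = u.length + z := by simp
  refine Theta_eq (by omega) (by omega) ?_ fun i hi => ?_
  · rw [hzc _ le_rfl, hlen]
    omega
  · rw [hzc _ hi.le]
    omega

lemma urnColors_eq_mul {m n : ℕ}
    (hζ : ∀ t ∈ Finset.Icc 1 n, ζ t ω = m) : urnColors ζ n ω = n * m := by
  rw [urnColors, Finset.sum_congr rfl hζ, Finset.sum_const, Nat.card_Icc, smul_eq_mul,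
    Nat.add_sub_cancel]

namespace IsUrn

lemma measure_cylinder_pos (h : IsUrn ρ ν P ζ B) (hρ : 0 < ρ) {m : ℕ} (hνm : ν m ≠ 0)
    (b : ℕ → ℕ) (hb : ∀ t, 1 ≤ t → b t ≤ t * m) (T : ℕ) :
    0 < P {ω | ∀ t ∈ Finset.Icc 1 T, ζ t ω = m ∧ B t ω = b t} := by
  have := h.prob
  induction T with
  | zero => simp
  | succ T ih =>
    set C := {ω | ∀ t ∈ Finset.Icc 1 T, ζ t ω = m ∧ B t ω = b t}
    have hC : MeasurableSet[urnPast ζ B (T + 1 - 1)] C :=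
      measurableSet_urnPast_forall (fun t ht => Finset.mem_Icc.1 ht) fun t x y => x = m ∧ y = b t
    set H := C ∩ ζ (T + 1) ⁻¹' {m}
    have hH : MeasurableSet[urnHist ζ B (T + 1)] H :=
      (le_sup_left (a := urnPast ζ B (T + 1 - 1)) _ hC).inter
        (measurable_zeta_urnHist _ (measurableSet_singleton m))
    have hHc : H ⊆ {ω | urnColors ζ (T + 1) ω = (T + 1) * m} := fun ω ⟨hωC, hωm⟩ =>
      urnColors_eq_mul fun t ht => by
        rcases (Finset.mem_Icc.1 ht).2.lt_or_eq with hlt | rfl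
        · exact (hωC t (Finset.mem_Icc.2 ⟨(Finset.mem_Icc.1 ht).1, by omega⟩)).1
        · exact hωm
    have hPH : 0 < P H := by
      rw [h.measure_inter_zeta_preimage T.succ_pos hC,
        PMF.toMeasure_apply_singleton _ _ (measurableSet_singleton m)]
      exact ENNReal.mul_pos hνm ih.ne'
    have hset : {ω | ∀ t ∈ Finset.Icc 1 (T + 1), ζ t ω = m ∧ B t ω = b t} =
        H ∩ {ω | B (T + 1) ω = b (T + 1)} := by
      ext ω
      simp only [← Finset.insert_Icc_right_eq_Icc_add_one (show 1 ≤ T + 1 by omega),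
        Finset.forall_mem_insert, Set.mem_inter_iff, Set.mem_ofPred_eq, Set.mem_preimage,
        Set.mem_singleton_iff, H, C]
      tauto
    rw [hset]
    rcases Nat.eq_zero_or_pos (b (T + 1)) with h0 | hpos
    · rw [h0, h.measure_draw_zero_of_subset T.succ_pos hH hHc]
      exact ENNReal.mul_pos (ENNReal.ofReal_pos.2 (by positivity)).ne' hPH.ne'
    · rw [h.measure_draw_pos_of_subset T.succ_pos hpos (hb _ T.succ_pos) hH hHc]
      exact ENNReal.mul_pos (ENNReal.ofReal_pos.2 (by positivity)).ne' hPH.ne'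

lemma exists_offspring_pos (h : IsUrn ρ ν P ζ B) (hρ : 0 < ρ) (hν0 : ν 0 < 1) {z : ℕ}
    (hz : 1 ≤ z) {j : ℕ} (g : Fin j → ℕ) (hg : ∀ i, 1 ≤ g i) :
    ∃ n : ℕ, 0 < P {ω | Ncol ζ B z ω = j + n ∧
      (∀ i : Fin j, Ydraw ζ B z ((i : ℕ) + 1) ω = g i) ∧
      ∀ ℓ : ℕ, j < ℓ → ℓ ≤ j + n → Ydraw ζ B z ℓ ω = 0} := by
  obtain ⟨m, hm, hνm⟩ := exists_ne_zero_apply_ne_zero hν0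
  set g' : ℕ → ℕ := fun i => if hi : i < j then g ⟨i, hi⟩ else 1
  have hg' : ∀ i, 1 ≤ g' i := fun i => by
    by_cases hi : i < j <;> simp [g', hi, hg]
  set w := stackWord g' j ++ List.replicate z 0
  have hb : ∀ t, 1 ≤ t → w.getD (t - 1) 0 ≤ t * m := fun t ht =>
    (getD_stackWord_append_le hg' j z ht).trans (Nat.le_mul_of_pos_right t (Nat.pos_of_ne_zero hm))
  have hjw : j ≤ w.length * m := by
    have := le_length_stackWord hg' j
    simp only [w, List.length_append, List.length_replicate]
    nlinarith [Nat.pos_of_ne_zero hm]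
  refine ⟨w.length * m - j, (h.measure_cylinder_pos hρ hνm _ hb w.length).trans_le
    (measure_mono fun ω hω => ?_)⟩
  simp only [Set.mem_ofPred_eq] at hω
  have hθ : Theta B z ω = w.length :=
    Theta_eq_length hz (by simp [count_stackWord]) fun t ht => (hω t ht).2
  have hY : ∀ ℓ, Ydraw ζ B z ℓ ω = w.count ℓ := fun ℓ => by
    rw [Ydraw, hθ, card_filter_eq_count_take le_rfl (fun t ht => (hω t ht).2), List.take_length]
  refine ⟨?_, fun i => ?_, fun ℓ hjℓ _ => ?_⟩
  · rw [Ncol, hθ, urnColors_eq_mul fun t ht => (hω t ht).1]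
    omega
  · rw [hY, List.count_append, count_stackWord, List.count_replicate]
    simp [g', i.isLt]
  · rw [hY, List.count_append, count_stackWord, List.count_replicate]
    simp only [beq_iff_eq]
    split_ifs <;> omega

end IsUrn

lemma urnHist_mono {m n : ℕ} (hm : 1 ≤ m) (hmn : m ≤ n) :
    urnHist ζ B m ≤ urnHist ζ B n := by
  rcases hmn.eq_or_lt with rfl | hlt
  · exact le_rfl
  · exact (urnHist_le_urnPast hm (by omega : m ≤ n - 1)).trans le_sup_left

/-- Junk value `0` when neither color is drawn after step `s`. -/
noncomputable def nextHit (B : ℕ → Ω → ℕ) (c s : ℕ) (ω : Ω) : ℕ :=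
  sInf {u | s < u ∧ (B u ω = 0 ∨ B u ω = c)}

def firstHitIs (B : ℕ → Ω → ℕ) (c s a : ℕ) : Set Ω :=
  {ω | s < nextHit B c s ω ∧ B (nextHit B c s ω) ω = a}

section NextHit

variable {c s u : ℕ}

lemma nextHit_eq_iff (hsu : s < u) : nextHit B c s ω = u ↔
    (∀ i ∈ Finset.Ioo s u, B i ω ≠ 0 ∧ B i ω ≠ c) ∧ (B u ω = 0 ∨ B u ω = c) := by
  constructor
  · rintro rfl
    have hne : {u | s < u ∧ (B u ω = 0 ∨ B u ω = c)}.Nonempty := by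
      by_contra hemp
      rw [Set.not_nonempty_iff_eq_empty] at hemp
      simp [nextHit, hemp] at hsu
    refine ⟨fun i hi => ?_, (Nat.sInf_mem hne).2⟩
    have := Nat.notMem_of_lt_sInf (Finset.mem_Ioo.1 hi).2
    simp only [Set.mem_ofPred_eq, not_and, not_or] at this
    exact this (Finset.mem_Ioo.1 hi).1
  · rintro ⟨hno, hu⟩
    refine le_antisymm (Nat.sInf_le ⟨hsu, hu⟩) (le_csInf ⟨u, hsu, hu⟩ fun i ⟨hsi, hi⟩ => ?_)
    by_contra hlt
    have := hno i (Finset.mem_Ioo.2 ⟨hsi, not_le.1 hlt⟩)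
    tauto

lemma lt_nextHit_of_notMem_noZeroAfter (hω : ω ∉ noZeroAfter B s) : s < nextHit B c s ω := by
  simp only [noZeroAfter, Set.mem_ofPred_eq, not_forall, not_not] at hω
  obtain ⟨t, hst, ht⟩ := hω
  exact (Nat.sInf_mem (⟨t, hst, Or.inl ht⟩ : {u | s < u ∧ (B u ω = 0 ∨ B u ω = c)}.Nonempty)).1

lemma firstHitIs_inter_nextHit_eq (hsu : s < u) (a : ℕ) :
    firstHitIs B c s a ∩ nextHit B c s ⁻¹' {u} = {ω | nextHit B c s ω = u ∧ B u ω = a} := by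
  ext ω
  simp only [firstHitIs, Set.mem_inter_iff, Set.mem_ofPred_eq, Set.mem_preimage,
    Set.mem_singleton_iff]
  constructor
  · rintro ⟨⟨-, ha⟩, rfl⟩
    exact ⟨rfl, ha⟩
  · rintro ⟨rfl, ha⟩
    exact ⟨⟨hsu, ha⟩, rfl⟩

lemma measurableSet_nextHit_eq_and (hsu : s < u) (a : ℕ) :
    MeasurableSet[urnPast ζ B u] {ω | nextHit B c s ω = u ∧ B u ω = a} := by
  have hset : {ω | nextHit B c s ω = u ∧ B u ω = a} =
      {ω | ∀ i ∈ Finset.Ioo s u, B i ω ≠ 0 ∧ B i ω ≠ c} ∩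
        {ω | (B u ω = 0 ∨ B u ω = c) ∧ B u ω = a} := by
    ext ω
    simp only [Set.mem_ofPred_eq, Set.mem_inter_iff, nextHit_eq_iff hsu, and_assoc]
  rw [hset]
  exact (measurableSet_urnPast_forall (fun t ht => by simp only [Finset.mem_Ioo] at ht; omega)
    fun _ _ b => b ≠ 0 ∧ b ≠ c).inter (measurable_B_urnPast (by omega) le_rfl
      (MeasurableSet.of_discrete (s := {b | (b = 0 ∨ b = c) ∧ b = a})))

end NextHit

namespace IsUrn

lemma measurable_nextHit (h : IsUrn ρ ν P ζ B) (c s : ℕ) : Measurable (nextHit B c s) := by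
  refine measurable_to_countable' fun u => ?_
  rcases lt_or_ge s u with hsu | hus
  · have hset : nextHit B c s ⁻¹' {u} = {ω | nextHit B c s ω = u ∧ B u ω = 0} ∪
        {ω | nextHit B c s ω = u ∧ B u ω = c} := by
      ext ω
      simp only [Set.mem_preimage, Set.mem_singleton_iff, Set.mem_union, Set.mem_ofPred_eq]
      constructor
      · intro hω
        rcases ((nextHit_eq_iff hsu).1 hω).2 with h0 | hc
        exacts [Or.inl ⟨hω, h0⟩, Or.inr ⟨hω, hc⟩]
      · rintro (⟨hω, -⟩ | ⟨hω, -⟩) <;> exact hω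
    rw [hset]
    exact (h.urnPast_le u _ (measurableSet_nextHit_eq_and hsu 0)).union
      (h.urnPast_le u _ (measurableSet_nextHit_eq_and hsu c))
  · have hset : nextHit B c s ⁻¹' {u} =
        {_ω | u = 0} ∩ ⋂ t, B t ⁻¹' {b | s < t → ¬(b = 0 ∨ b = c)} := by
      ext ω
      simp only [Set.mem_preimage, Set.mem_singleton_iff, Set.mem_inter_iff, Set.mem_ofPred_eq,
        Set.mem_iInter]
      have hempty : (∀ t, s < t → ¬(B t ω = 0 ∨ B t ω = c)) ↔
          {u | s < u ∧ (B u ω = 0 ∨ B u ω = c)} = ∅ := by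
        simp [Set.eq_empty_iff_forall_notMem]
      constructor
      · intro hω
        have hno : ∀ t, s < t → ¬(B t ω = 0 ∨ B t ω = c) := fun t hst ht => by
          have := (Nat.sInf_mem (⟨t, hst, ht⟩ : {u | s < u ∧ (B u ω = 0 ∨ B u ω = c)}.Nonempty)).1
          rw [show sInf _ = nextHit B c s ω from rfl, hω] at this
          omega
        refine ⟨?_, hno⟩
        rw [← hω, nextHit, hempty.1 hno, Nat.sInf_empty]
      · rintro ⟨rfl, hno⟩
        rw [nextHit, hempty.1 hno, Nat.sInf_empty]
    rw [hset]
    exact (MeasurableSet.const _).inter (MeasurableSet.iInter fun t => h.measB t .of_discrete)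

lemma measurableSet_firstHitIs (h : IsUrn ρ ν P ζ B) (c s a : ℕ) :
    MeasurableSet (firstHitIs B c s a) := by
  have hτ := h.measurable_nextHit c s
  have hBτ : Measurable fun ω => B (nextHit B c s ω) ω :=
    (measurable_from_prod_countable_left (f := fun p : Ω × ℕ => B p.2 p.1) fun t => h.measB t).comp
      (measurable_id.prodMk hτ)
  exact (measurableSet_lt measurable_const hτ).inter (hBτ (measurableSet_singleton a))

lemma measure_firstHitIs_zero_eq_mul (h : IsUrn ρ ν P ζ B) (hρ : 0 ≤ ρ) {c s : ℕ} (hc : 1 ≤ c)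
    {G : Set Ω} (hG : MeasurableSet[urnHist ζ B (s + 1)] G)
    (hGc : ∀ ω ∈ G, c ≤ urnColors ζ (s + 1) ω) :
    P (G ∩ firstHitIs B c s 0) = ENNReal.ofReal ρ * P (G ∩ firstHitIs B c s c) := by
  rw [measure_eq_tsum_inter_fiber P (h.measurable_nextHit c s),
    measure_eq_tsum_inter_fiber P (h.measurable_nextHit c s) (G ∩ _), ← ENNReal.tsum_mul_left]
  refine tsum_congr fun u => ?_
  rcases le_or_gt u s with hus | hsu
  · have hempty : ∀ a, G ∩ firstHitIs B c s a ∩ nextHit B c s ⁻¹' {u} = ∅ := fun a =>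
      Set.eq_empty_iff_forall_notMem.2 fun ω ⟨⟨_, hlt, _⟩, hu⟩ => by
        rw [Set.mem_preimage, Set.mem_singleton_iff] at hu
        omega
    simp [hempty]
  · set D := G ∩ {ω | ∀ i ∈ Finset.Ioo s u, B i ω ≠ 0 ∧ B i ω ≠ c}
    have hD : MeasurableSet[urnHist ζ B u] D :=
      (urnHist_mono (by omega) (by omega : s + 1 ≤ u) _ hG).inter
        (urnPast_le_urnHist (by omega : u - 1 < u) _
          (measurableSet_urnPast_forall (fun t ht => by simp only [Finset.mem_Ioo] at ht; omega)
            fun _ _ b => b ≠ 0 ∧ b ≠ c))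
    have hfiber : ∀ a, a = 0 ∨ a = c →
        G ∩ firstHitIs B c s a ∩ nextHit B c s ⁻¹' {u} = D ∩ {ω | B u ω = a} := by
      intro a ha
      rw [Set.inter_assoc, firstHitIs_inter_nextHit_eq hsu]
      ext ω
      simp only [D, Set.mem_inter_iff, Set.mem_ofPred_eq, nextHit_eq_iff hsu]
      constructor
      · rintro ⟨hωG, ⟨hno, -⟩, hωa⟩
        exact ⟨⟨hωG, hno⟩, hωa⟩
      · rintro ⟨⟨hωG, hno⟩, hωa⟩
        exact ⟨hωG, ⟨hno, hωa ▸ ha⟩, hωa⟩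
    rw [hfiber 0 (Or.inl rfl), hfiber c (Or.inr rfl)]
    exact h.measure_draw_zero_eq_mul hρ (by omega) hc hD fun ω hω =>
      (hGc ω hω.1).trans (urnColors_mono (by omega) ω)

lemma measure_firstHitIs_add (h : IsUrn ρ ν P ζ B) (hρ : 0 < ρ) (hν : nubar ν < ⊤) {c s : ℕ}
    (hc : c ≠ 0) {G : Set Ω} (hG : MeasurableSet G) :
    P (G ∩ firstHitIs B c s c) + P (G ∩ firstHitIs B c s 0) = P G := by
  have hdisj : Disjoint (G ∩ firstHitIs B c s c) (G ∩ firstHitIs B c s 0) :=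
    Set.disjoint_left.2 fun ω h1 h2 => hc (h1.2.2.symm.trans h2.2.2)
  have hnull : (firstHitIs B c s c ∪ firstHitIs B c s 0)ᶜ ⊆ noZeroAfter B s := by
    intro ω hω
    by_contra hz
    have hlt := lt_nextHit_of_notMem_noZeroAfter (c := c) hz
    rcases ((nextHit_eq_iff hlt).1 rfl).2 with h0 | hcc
    exacts [hω (Or.inr ⟨hlt, h0⟩), hω (Or.inl ⟨hlt, hcc⟩)]
  rw [← measure_union hdisj (hG.inter (h.measurableSet_firstHitIs c s 0)),
    ← Set.inter_union_distrib_left,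
    measure_inter_conull (measure_mono_null hnull (h.measure_noZeroAfter hρ hν s))]

lemma measure_inter_firstHitIs_color (h : IsUrn ρ ν P ζ B) (hρ : 0 < ρ) (hν : nubar ν < ⊤)
    {c s : ℕ} (hc : 1 ≤ c) {G : Set Ω} (hG : MeasurableSet[urnHist ζ B (s + 1)] G)
    (hGc : ∀ ω ∈ G, c ≤ urnColors ζ (s + 1) ω) :
    P (G ∩ firstHitIs B c s c) = ENNReal.ofReal (1 / (1 + ρ)) * P G := by
  have hsum : ENNReal.ofReal (1 + ρ) * P (G ∩ firstHitIs B c s c) = P G := by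
    rw [ENNReal.ofReal_add zero_le_one hρ.le, ENNReal.ofReal_one, add_mul, one_mul,
      ← h.measure_firstHitIs_zero_eq_mul hρ.le hc hG hGc]
    exact h.measure_firstHitIs_add hρ hν (by omega) (h.urnHist_le _ _ hG)
  rw [← hsum, ← mul_assoc, ← ENNReal.ofReal_mul (by positivity), one_div_mul_cancel (by positivity),
    ENNReal.ofReal_one, one_mul]

lemma measure_inter_firstHitIs_zero (h : IsUrn ρ ν P ζ B) (hρ : 0 < ρ) (hν : nubar ν < ⊤)
    {c s : ℕ} (hc : 1 ≤ c) {G : Set Ω} (hG : MeasurableSet[urnHist ζ B (s + 1)] G)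
    (hGc : ∀ ω ∈ G, c ≤ urnColors ζ (s + 1) ω) :
    P (G ∩ firstHitIs B c s 0) = ENNReal.ofReal (ρ / (1 + ρ)) * P G := by
  rw [h.measure_firstHitIs_zero_eq_mul hρ.le hc hG hGc,
    h.measure_inter_firstHitIs_color hρ hν hc hG hGc, ← mul_assoc, ← ENNReal.ofReal_mul hρ.le,
    mul_one_div]

end IsUrn

def colorThenZero (B : ℕ → Ω → ℕ) (c s : ℕ) : Set Ω :=
  {ω | ω ∈ firstHitIs B c s c ∧ ω ∈ firstHitIs B c (nextHit B c s ω) 0}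

lemma colorThenZero_inter_nextHit_eq (c s u : ℕ) (G : Set Ω) :
    G ∩ colorThenZero B c s ∩ nextHit B c s ⁻¹' {u} =
      G ∩ firstHitIs B c s c ∩ nextHit B c s ⁻¹' {u} ∩ firstHitIs B c u 0 := by
  ext ω
  simp only [colorThenZero, Set.mem_inter_iff, Set.mem_preimage, Set.mem_singleton_iff,
    Set.mem_ofPred_eq]
  constructor
  · rintro ⟨⟨hωG, h1, h2⟩, hu⟩
    rw [hu] at h2
    exact ⟨⟨⟨hωG, h1⟩, hu⟩, h2⟩
  · rintro ⟨⟨⟨hωG, h1⟩, hu⟩, h2⟩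
    rw [← hu] at h2
    exact ⟨⟨hωG, h1, h2⟩, hu⟩

lemma exists_Ydraw_eq_one_of_mem_colorThenZero (hB : ∀ n ω, 1 ≤ n → B n ω ≤ urnColors ζ n ω)
    {z s c : ℕ} (hz : 1 ≤ z) (hzc : zeroCount B s ω = z - 1) (hcs : urnColors ζ s ω < c)
    (hcs' : c ≤ urnColors ζ (s + 1) ω) (hω : ω ∈ colorThenZero B c s) :
    ∃ ℓ, 1 ≤ ℓ ∧ ℓ ≤ Ncol ζ B z ω ∧ Ydraw ζ B z ℓ ω = 1 := by
  obtain ⟨⟨hsu, hu⟩, huv, hv⟩ := hω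
  set u := nextHit B c s ω
  set v := nextHit B c u ω
  have hno₁ := ((nextHit_eq_iff hsu).1 rfl).1
  have hno₂ := ((nextHit_eq_iff huv).1 rfl).1
  have hθ : Theta B z ω = v := by
    rw [show z = z - 1 + 1 by omega]
    refine Theta_succ_eq hzc (hsu.trans huv) (fun i hi => ?_) hv
    simp only [Finset.mem_Ioo] at hi
    rcases lt_trichotomy i u with hiu | rfl | hui
    · exact (hno₁ i (Finset.mem_Ioo.2 ⟨hi.1, hiu⟩)).1
    · rw [hu]; omega
    · exact (hno₂ i (Finset.mem_Ioo.2 ⟨hui, hi.2⟩)).1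
  have hYc : (Finset.Icc 1 v).filter (fun i => B i ω = c) = {u} := by
    ext i
    simp only [Finset.mem_filter, Finset.mem_Icc, Finset.mem_singleton]
    constructor
    · rintro ⟨⟨hi1, hiv⟩, hic⟩
      by_contra hiu
      rcases Nat.lt_or_ge s i with hsi | his
      · rcases Nat.lt_or_ge i u with hiu' | hui
        · exact (hno₁ i (Finset.mem_Ioo.2 ⟨hsi, hiu'⟩)).2 hic
        · rcases Nat.lt_or_ge i v with hiv' | hvi
          · exact (hno₂ i (Finset.mem_Ioo.2 ⟨by omega, hiv'⟩)).2 hic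
          · rw [show i = v by omega, hv] at hic; omega
      · have := (hB i ω hi1).trans (urnColors_mono his ω)
        omega
    · rintro rfl
      exact ⟨⟨by omega, huv.le⟩, hu⟩
  refine ⟨c, by omega, ?_, ?_⟩
  · rw [Ncol, hθ]
    exact hcs'.trans (urnColors_mono (by omega) ω)
  · rw [Ydraw, hθ, hYc, Finset.card_singleton]

/-- Color `c` is created at step `s + 1`, right after the `k`-th draw of color `0` (with `s = 0`
when `k = 0`); the condition on `zeroCount` rules out the junk value of `Theta`. -/
def newColorAfter (ζ B : ℕ → Ω → ℕ) (k s c : ℕ) : Set Ω :=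
  {ω | Theta B k ω = s ∧ zeroCount B s ω = k} ∩ ζ (s + 1) ⁻¹' {x | 1 ≤ x} ∩
    urnColors ζ (s + 1) ⁻¹' {c}

lemma measurableSet_newColorAfter (k s c : ℕ) :
    MeasurableSet[urnHist ζ B (s + 1)] (newColorAfter ζ B k s c) :=
  ((urnPast_le_urnHist s.lt_succ_self _ (measurableSet_Theta_eq k s)).inter
    (measurable_zeta_urnHist _ .of_discrete)).inter
    (measurable_urnColors_urnHist (by omega) (measurableSet_singleton c))

lemma urnColors_bounds_of_mem_newColorAfter {k s c : ℕ} (hω : ω ∈ newColorAfter ζ B k s c) :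
    urnColors ζ s ω < c ∧ c ≤ urnColors ζ (s + 1) ω := by
  obtain ⟨⟨-, hζ⟩, hc⟩ := hω
  have := urnColors_succ (ζ := ζ) s ω
  simp only [Set.mem_preimage, Set.mem_singleton_iff, Set.mem_ofPred_eq] at hζ hc
  omega

namespace IsUrn

lemma measurableSet_colorThenZero (h : IsUrn ρ ν P ζ B) (c s : ℕ) :
    MeasurableSet (colorThenZero B c s) := by
  have hset : colorThenZero B c s =
      ⋃ u, firstHitIs B c s c ∩ nextHit B c s ⁻¹' {u} ∩ firstHitIs B c u 0 := by
    ext ω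
    simpa [Set.univ_inter] using
      congrArg (ω ∈ ·) (colorThenZero_inter_nextHit_eq (B := B) c s (nextHit B c s ω) Set.univ)
  rw [hset]
  exact MeasurableSet.iUnion fun u => ((h.measurableSet_firstHitIs c s c).inter
    (h.measurable_nextHit c s (measurableSet_singleton u))).inter (h.measurableSet_firstHitIs c u 0)

lemma measure_inter_colorThenZero (h : IsUrn ρ ν P ζ B) (hρ : 0 < ρ) (hν : nubar ν < ⊤)
    {c s : ℕ} (hc : 1 ≤ c) {G : Set Ω} (hG : MeasurableSet[urnHist ζ B (s + 1)] G)
    (hGc : ∀ ω ∈ G, c ≤ urnColors ζ (s + 1) ω) :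
    P (G ∩ colorThenZero B c s) = ENNReal.ofReal (ρ / (1 + ρ) ^ 2) * P G := by
  have hsplit : ENNReal.ofReal (ρ / (1 + ρ) ^ 2) =
      ENNReal.ofReal (ρ / (1 + ρ)) * ENNReal.ofReal (1 / (1 + ρ)) := by
    rw [← ENNReal.ofReal_mul (by positivity)]
    congr 1
    field_simp
  rw [hsplit, mul_assoc, ← h.measure_inter_firstHitIs_color hρ hν hc hG hGc,
    measure_eq_tsum_inter_fiber P (h.measurable_nextHit c s),
    measure_eq_tsum_inter_fiber P (h.measurable_nextHit c s) (G ∩ firstHitIs B c s c),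
    ← ENNReal.tsum_mul_left]
  refine tsum_congr fun u => ?_
  rw [colorThenZero_inter_nextHit_eq]
  rcases le_or_gt u s with hus | hsu
  · have hempty : G ∩ firstHitIs B c s c ∩ nextHit B c s ⁻¹' {u} = ∅ :=
      Set.eq_empty_iff_forall_notMem.2 fun ω ⟨⟨_, hlt, _⟩, hu⟩ => by
        rw [Set.mem_preimage, Set.mem_singleton_iff] at hu
        omega
    simp [hempty]
  · have hGu : MeasurableSet[urnHist ζ B (u + 1)]
        (G ∩ firstHitIs B c s c ∩ nextHit B c s ⁻¹' {u}) := by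
      rw [Set.inter_assoc, firstHitIs_inter_nextHit_eq hsu]
      exact urnPast_le_urnHist u.lt_succ_self _ ((urnHist_le_urnPast (by omega) hsu _ hG).inter
        (measurableSet_nextHit_eq_and hsu c))
    exact h.measure_inter_firstHitIs_zero hρ hν hc hGu fun ω hω =>
      (hGc ω hω.1.1).trans (urnColors_mono (by omega) ω)

lemma tsum_measure_Theta_eq (h : IsUrn ρ ν P ζ B) (hρ : 0 < ρ) (hν : nubar ν < ⊤) (k : ℕ) :
    ∑' s, P {ω | Theta B k ω = s ∧ zeroCount B s ω = k} = 1 := by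
  have := h.prob
  have hT : ∀ s, MeasurableSet {ω | Theta B k ω = s ∧ zeroCount B s ω = k} := fun s =>
    h.urnPast_le s _ (measurableSet_Theta_eq k s)
  rw [← measure_iUnion_of_subset_fiber P (Theta B k) (fun _ _ hω => hω.1) hT]
  refine (prob_compl_eq_zero_iff (MeasurableSet.iUnion hT)).1 (measure_mono_null ?_
    (measure_iUnion_null fun s => h.measure_noZeroAfter hρ hν s))
  intro ω hω
  by_contra hall
  simp only [Set.mem_iUnion, not_exists] at hall
  exact hω (Set.mem_iUnion.2 ⟨Theta B k ω, rfl, zeroCount_Theta hall k⟩)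

lemma tsum_measure_newColorAfter (h : IsUrn ρ ν P ζ B) (k s : ℕ) :
    ∑' c, P (newColorAfter ζ B k s c) =
      (1 - ν 0) * P {ω | Theta B k ω = s ∧ zeroCount B s ω = k} := by
  have hpos : {x : ℕ | 1 ≤ x} = {0}ᶜ := by
    ext x
    simp [Nat.one_le_iff_ne_zero]
  have hT : MeasurableSet[urnPast ζ B (s + 1 - 1)]
      {ω | Theta B k ω = s ∧ zeroCount B s ω = k} := by
    rw [Nat.add_sub_cancel]
    exact measurableSet_Theta_eq k s
  simp only [newColorAfter]
  rw [← measure_eq_tsum_inter_fiber P (h.measurable_urnColors (s + 1)),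
    h.measure_inter_zeta_preimage (by omega) hT, hpos,
    prob_compl_eq_one_sub (measurableSet_singleton 0),
    PMF.toMeasure_apply_singleton _ _ (measurableSet_singleton 0)]

lemma tsum_tsum_measure_newColorAfter (h : IsUrn ρ ν P ζ B) (hρ : 0 < ρ) (hν : nubar ν < ⊤)
    (k : ℕ) : ∑' s, ∑' c, P (newColorAfter ζ B k s c) = 1 - ν 0 := by
  simp_rw [h.tsum_measure_newColorAfter, ENNReal.tsum_mul_left, h.tsum_measure_Theta_eq hρ hν,
    mul_one]

lemma measure_iUnion_newColorAfter_inter (h : IsUrn ρ ν P ζ B) {k : ℕ} {F : ℕ → ℕ → Set Ω}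
    (hF : ∀ s c, MeasurableSet (F s c)) :
    P (⋃ s, ⋃ c, newColorAfter ζ B k s c ∩ F s c) =
      ∑' s, ∑' c, P (newColorAfter ζ B k s c ∩ F s c) := by
  have hm : ∀ s c, MeasurableSet (newColorAfter ζ B k s c ∩ F s c) := fun s c =>
    (h.urnHist_le _ _ (measurableSet_newColorAfter k s c)).inter (hF s c)
  rw [measure_iUnion_of_subset_fiber P (Theta B k)
    (fun s _ hω => (Set.mem_iUnion.1 hω).choose_spec.1.1.1.1) fun s => MeasurableSet.iUnion (hm s)]
  exact tsum_congr fun s =>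
    measure_iUnion_of_subset_fiber P (urnColors ζ (s + 1)) (fun _ _ hω => hω.1.2) (hm s)

lemma le_measure_exists_Ydraw_eq_one (h : IsUrn ρ ν P ζ B) (hρ : 0 < ρ) (hν : nubar ν < ⊤)
    {z : ℕ} (hz : 1 ≤ z) :
    ENNReal.ofReal (ρ / (1 + ρ) ^ 2) * (1 - ν 0) ≤
      P {ω | ∃ ℓ, 1 ≤ ℓ ∧ ℓ ≤ Ncol ζ B z ω ∧ Ydraw ζ B z ℓ ω = 1} := by
  have hpiece : ∀ s c, ENNReal.ofReal (ρ / (1 + ρ) ^ 2) * P (newColorAfter ζ B (z - 1) s c) ≤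
      P (newColorAfter ζ B (z - 1) s c ∩ colorThenZero B c s) := by
    intro s c
    rcases Nat.eq_zero_or_pos c with rfl | hc
    · have hempty : newColorAfter ζ B (z - 1) s 0 = ∅ := Set.eq_empty_iff_forall_notMem.2
        fun ω hω => (Nat.not_lt_zero _ (urnColors_bounds_of_mem_newColorAfter hω).1)
      simp [hempty]
    · exact (h.measure_inter_colorThenZero hρ hν hc (measurableSet_newColorAfter _ s c)
        fun ω hω => (urnColors_bounds_of_mem_newColorAfter hω).2).ge
  have hW : (⋃ s, ⋃ c, newColorAfter ζ B (z - 1) s c ∩ colorThenZero B c s) ⊆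
      {ω | ∃ ℓ, 1 ≤ ℓ ∧ ℓ ≤ Ncol ζ B z ω ∧ Ydraw ζ B z ℓ ω = 1} := by
    simp only [Set.iUnion_subset_iff]
    rintro s c ω ⟨hωN, hω⟩
    exact exists_Ydraw_eq_one_of_mem_colorThenZero h.B_le hz hωN.1.1.2
      (urnColors_bounds_of_mem_newColorAfter hωN).1
      (urnColors_bounds_of_mem_newColorAfter hωN).2 hω
  calc ENNReal.ofReal (ρ / (1 + ρ) ^ 2) * (1 - ν 0)
      = ∑' s, ∑' c, ENNReal.ofReal (ρ / (1 + ρ) ^ 2) * P (newColorAfter ζ B (z - 1) s c) := by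
        simp_rw [ENNReal.tsum_mul_left, h.tsum_tsum_measure_newColorAfter hρ hν]
    _ ≤ ∑' s, ∑' c, P (newColorAfter ζ B (z - 1) s c ∩ colorThenZero B c s) :=
        ENNReal.tsum_le_tsum fun s => ENNReal.tsum_le_tsum (hpiece s)
    _ = P (⋃ s, ⋃ c, newColorAfter ζ B (z - 1) s c ∩ colorThenZero B c s) :=
        (h.measure_iUnion_newColorAfter_inter fun s c => h.measurableSet_colorThenZero c s).symm
    _ ≤ _ := measure_mono hW

end IsUrn

end

/-- **Proposition (irreducibility of the branching Markov chain `Z` omitting type-0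
particles).** The offspring of a particle of type `z` being distributed as the list
`[Y_z^1, …, Y_z^{N_z}]` of the urn: (i) particles of type `0` never reproduce;
(ii) for any `z ≥ 1` and any types `z₁, …, z_j ≥ 1` there is an `n ≥ 0` such that with
positive probability a particle of type `z` has exactly `j + n` children of respective
types `z₁, …, z_j, 0, …, 0`; (iii) for any `z ≥ 1`, a particle of type `z` has a child
of type `1` with probability at least `(1 - ν(0))·ρ/(1+ρ)² > 0`. -/
theorem bmc_irreducibility
    (ρ : ℝ) (hρ : 0 < ρ) (ν : PMF ℕ) (hν0 : ν 0 < 1) (hnubar : nubar ν < ⊤)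
    {Ω : Type*} [MeasurableSpace Ω] (P : Measure Ω)
    (ζ B : ℕ → Ω → ℕ) (h : IsUrn ρ ν P ζ B) :
    (∀ ω, Ncol ζ B 0 ω = 0) ∧
    (∀ z : ℕ, 1 ≤ z → ∀ j : ℕ, ∀ g : Fin j → ℕ, (∀ i, 1 ≤ g i) →
      ∃ n : ℕ, 0 < P {ω | Ncol ζ B z ω = j + n ∧
        (∀ i : Fin j, Ydraw ζ B z ((i : ℕ) + 1) ω = g i) ∧
        ∀ ℓ : ℕ, j < ℓ → ℓ ≤ j + n → Ydraw ζ B z ℓ ω = 0}) ∧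
    (∀ z : ℕ, 1 ≤ z →
      ENNReal.ofReal ((1 - (ν 0).toReal) * ρ / (1 + ρ) ^ 2) ≤
        P {ω | ∃ ℓ : ℕ, 1 ≤ ℓ ∧ ℓ ≤ Ncol ζ B z ω ∧ Ydraw ζ B z ℓ ω = 1}) ∧
    0 < (1 - (ν 0).toReal) * ρ / (1 + ρ) ^ 2 := by
  have hν0' : (ν 0).toReal < 1 := by
    simpa using ENNReal.toReal_strict_mono ENNReal.one_ne_top hν0
  refine ⟨fun ω => by simp [Ncol, Theta_zero, urnColors],
    fun z hz j g hg => h.exists_offspring_pos hρ hν0 hz g hg, fun z hz => ?_,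
    div_pos (mul_pos (by linarith) hρ) (by positivity)⟩
  convert h.le_measure_exists_Ydraw_eq_one hρ hnubar hz using 1
  rw [mul_div_assoc, ENNReal.ofReal_mul (by linarith), ENNReal.ofReal_sub _ ENNReal.toReal_nonneg,
    ENNReal.ofReal_one, ENNReal.ofReal_toReal (hν0.trans ENNReal.one_lt_top).ne, mul_comm]

end TBRWPaper
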